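/- The matching M that arises from {u_i t_i : i ∈ [n]} by adding, for every j ∈ [m], an arbitrary edge of the clique on C_j, is an acyclic matching in G(Γ) of size n+m; in particular ν_ac(G(Γ)) ≥ n+m. -/

import Mathlib

open SimpleGraph

/-- The subgraph of `G` consisting of those pairs in `s` that are actually edges of `G`. -/
def pairsSubgraph {V : Type*} (G : SimpleGraph V) (s : Set (V × V)) : G.Subgraph where
  verts := {v | ∃ a b, (G.Adj a b ∧ ((a, b) ∈ s ∨ (b, a) ∈ s)) ∧ (v = a ∨ v = b)}
  Adj a b := G.Adj a b ∧ ((a, b) ∈ s ∨ (b, a) ∈ s)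
  adj_sub h := h.1
  edge_vert h := ⟨_, _, h, Or.inl rfl⟩
  symm := ⟨fun _ _ h => ⟨h.1.symm, h.2.symm⟩⟩

/-- `M` is an induced matching in `G`: it is a matching, and `G(M)`, the subgraph of `G`
induced by the set `V(M)` of covered vertices (which is `M.verts` for a matching subgraph),
is `1`-regular, i.e. every vertex of `G(M)` has exactly one neighbour in `G(M)`. -/
def IsInducedMatching {V : Type*} (G : SimpleGraph V) (M : G.Subgraph) : Prop :=
  M.IsMatching ∧ ∀ v : M.verts, ∃! w : M.verts, (G.induce M.verts).Adj v w

/-- `M` is an acyclic matching in `G`: it is a matching and `G(M)` is a forest. -/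
def IsAcyclicMatching {V : Type*} (G : SimpleGraph V) (M : G.Subgraph) : Prop :=
  M.IsMatching ∧ (G.induce M.verts).IsAcyclic

/-- `M` is a uniquely restricted matching in `G`: it is a matching and it is the unique
perfect matching of `G(M)`, i.e. the unique matching of `G` covering exactly `M.verts`. -/
def IsURMatching {V : Type*} (G : SimpleGraph V) (M : G.Subgraph) : Prop :=
  M.IsMatching ∧ ∀ M' : G.Subgraph, M'.IsMatching → M'.verts = M.verts → M' = M

/-- The (ordinary) matching number `ν(G)`: the maximum cardinality of a matching in `G`. -/
noncomputable def nuMatch {V : Type*} (G : SimpleGraph V) : ℕ :=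
  sSup {k : ℕ | ∃ M : G.Subgraph, M.IsMatching ∧ M.edgeSet.ncard = k}

/-- The uniquely restricted matching number `ν_ur(G)`. -/
noncomputable def nuUR {V : Type*} (G : SimpleGraph V) : ℕ :=
  sSup {k : ℕ | ∃ M : G.Subgraph, IsURMatching G M ∧ M.edgeSet.ncard = k}

/-- The acyclic matching number `ν_ac(G)`. -/
noncomputable def nuAc {V : Type*} (G : SimpleGraph V) : ℕ :=
  sSup {k : ℕ | ∃ M : G.Subgraph, IsAcyclicMatching G M ∧ M.edgeSet.ncard = k}

/-- The induced (strong) matching number `ν_s(G)`. -/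
noncomputable def nuS {V : Type*} (G : SimpleGraph V) : ℕ :=
  sSup {k : ℕ | ∃ M : G.Subgraph, IsInducedMatching G M ∧ M.edgeSet.ncard = k}

/-- `cyc` is an `M`-alternating cycle in `G`: a cycle of `G` whose edges alternate between
edges of `M` and edges of `E(G) \ M`. -/
def IsAltCycle {V : Type*} (G : SimpleGraph V) (M : G.Subgraph) {v : V}
    (cyc : G.Walk v v) : Prop :=
  cyc.IsCycle ∧ cyc.toSubgraph.spanningCoe.IsAlternating M.spanningCoe

/-- Vertices of the graph `G(Γ)` for the SATISFIABILITY instance `Γ` with `n` variables and `m`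
clauses: `Sum.inl (i, 0) = t_i`, `Sum.inl (i, 1) = f_i`, `Sum.inl (i, 2) = u_i` are the vertices
of the triangle `X_i`; `Sum.inr (j, none) = v_j`, and `Sum.inr (j, some l)` is the vertex of the
clique `C_j` identified with the literal `l` (it is isolated unless `l` belongs to `c_j`, so that
the clique `C_j` effectively has `|c_j| + 1` vertices). A literal `(i, true)` is `x_i` and a
literal `(i, false)` is `¬x_i`. -/
abbrev SatV (n m : ℕ) : Type := (Fin n × Fin 3) ⊕ (Fin m × Option (Fin n × Bool))

/-- The base relation for `G(Γ)`: all edges inside each triangle `X_i`, all edges inside each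
clique `C_j`, an edge from `f_i` to every vertex identified with the literal `x_i`, and an edge
from `t_i` to every vertex identified with the literal `¬x_i`. -/
def satRel {n m : ℕ} (c : Fin m → Finset (Fin n × Bool)) : SatV n m → SatV n m → Prop
  | Sum.inl (i, k), Sum.inl (i', k') => i = i' ∧ k ≠ k'
  | Sum.inr (j, o), Sum.inr (j', o') =>
      j = j' ∧ o ≠ o' ∧ (∀ l, o = some l → l ∈ c j) ∧ (∀ l, o' = some l → l ∈ c j)
  | Sum.inl (i, k), Sum.inr (j, o) =>
      (k = 1 ∧ o = some (i, true) ∧ (i, true) ∈ c j) ∨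
      (k = 0 ∧ o = some (i, false) ∧ (i, false) ∈ c j)
  | Sum.inr _, Sum.inl _ => False

/-- The graph `G(Γ)` built from the SATISFIABILITY instance `Γ` whose clauses are given by `c`. -/
def satGraph {n m : ℕ} (c : Fin m → Finset (Fin n × Bool)) : SimpleGraph (SatV n m) :=
  SimpleGraph.fromRel (satRel c)

/-- The matching arising from `{u_i t_i : i ∈ [n]}` by adding, for every `j ∈ [m]`, the edge of
the clique on `C_j` joining the vertices `Sum.inr (j, p j)` and `Sum.inr (j, q j)`. -/
def M3 {n m : ℕ} (c : Fin m → Finset (Fin n × Bool)) (p q : Fin m → Option (Fin n × Bool)) :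
    (satGraph c).Subgraph :=
  pairsSubgraph (satGraph c)
    ({pr | ∃ i : Fin n, pr = (Sum.inl (i, 2), Sum.inl (i, 0))} ∪
     {pr | ∃ j : Fin m, pr = (Sum.inr (j, p j), Sum.inr (j, q j))})

/-!
The edges `u_i t_i` and the chosen edges inside the cliques `C_j` are pairwise vertex-disjoint,
so they form a matching with `n + m` edges. For acyclicity, rank the covered vertices:
`u_i` below `t_i` below the clause vertices. Each vertex of `G(M)` then has at most one
neighbour of rank at least its own: `u_i` only sees `t_i` (as `f_i` is not covered), `t_i` sees
at most the vertex `¬x_i` of the single clause containing `¬x_i`, and a clause vertex sees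
only its partner in `C_j` among the clause vertices. A vertex of minimal rank on a cycle would
have two such neighbours.
-/

namespace SimpleGraph

variable {V : Type*} {G : SimpleGraph V}

theorem isAcyclic_of_rank {α : Type*} [LinearOrder α] (f : V → α)
    (h : ∀ v w w', G.Adj v w → G.Adj v w' → f v ≤ f w → f v ≤ f w' → w = w') :
    G.IsAcyclic := by
  classical
  intro u p hp
  obtain ⟨x, hx, hmin⟩ := p.support.toFinset.exists_min_image f ⟨u, by simp⟩
  rw [List.mem_toFinset] at hx
  obtain ⟨w, w', hne, hnbrs⟩ := Set.ncard_eq_two.mp (hp.ncard_neighborSet_toSubgraph_eq_two hx)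
  have hw : p.toSubgraph.Adj x w := by simp [← Subgraph.mem_neighborSet, hnbrs]
  have hw' : p.toSubgraph.Adj x w' := by simp [← Subgraph.mem_neighborSet, hnbrs]
  have hmin' : ∀ {y}, p.toSubgraph.Adj x y → f x ≤ f y := fun hy =>
    hmin _ (List.mem_toFinset.mpr (p.mem_verts_toSubgraph.mp hy.snd_mem))
  exact hne (h x w w' hw.adj_sub hw'.adj_sub (hmin' hw) (hmin' hw'))

section FamilyOfEdges

variable {ι : Type*} {a b : ι → V}

theorem pairsSubgraph_range_adj_iff (hadj : ∀ i, G.Adj (a i) (b i)) {v w : V} :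
    (pairsSubgraph G (Set.range fun i => (a i, b i))).Adj v w ↔ ∃ i, s(v, w) = s(a i, b i) := by
  constructor
  · rintro ⟨-, ⟨i, hi⟩ | ⟨i, hi⟩⟩ <;> obtain ⟨rfl, rfl⟩ := Prod.ext_iff.mp hi
    · exact ⟨i, rfl⟩
    · exact ⟨i, Sym2.eq_swap⟩
  · rintro ⟨i, hi⟩
    obtain ⟨rfl, rfl⟩ | ⟨rfl, rfl⟩ := Sym2.eq_iff.mp hi
    · exact ⟨hadj i, Or.inl ⟨i, rfl⟩⟩
    · exact ⟨(hadj i).symm, Or.inr ⟨i, rfl⟩⟩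

theorem mem_pairsSubgraph_range_verts (hadj : ∀ i, G.Adj (a i) (b i)) {v : V} :
    v ∈ (pairsSubgraph G (Set.range fun i => (a i, b i))).verts ↔ ∃ i, v ∈ s(a i, b i) := by
  constructor
  · rintro ⟨x, y, hxy, rfl | rfl⟩ <;>
      obtain ⟨i, hi⟩ := (pairsSubgraph_range_adj_iff hadj).mp hxy
    · exact ⟨i, hi ▸ Sym2.mem_mk_left _ _⟩
    · exact ⟨i, hi ▸ Sym2.mem_mk_right _ _⟩
  · rintro ⟨i, hv⟩
    obtain ⟨w, hw⟩ := Sym2.mem_iff_exists.mp hv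
    exact ((pairsSubgraph_range_adj_iff hadj).mpr ⟨i, hw.symm⟩).fst_mem

theorem pairsSubgraph_range_isMatching (hadj : ∀ i, G.Adj (a i) (b i))
    (hdisj : ∀ i j v, v ∈ s(a i, b i) → v ∈ s(a j, b j) → i = j) :
    (pairsSubgraph G (Set.range fun i => (a i, b i))).IsMatching := by
  intro v hv
  obtain ⟨i, hvi⟩ := (mem_pairsSubgraph_range_verts hadj).mp hv
  obtain ⟨w, hw⟩ := Sym2.mem_iff_exists.mp hvi
  refine ⟨w, (pairsSubgraph_range_adj_iff hadj).mpr ⟨i, hw.symm⟩, fun w' hw' => ?_⟩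
  obtain ⟨j, hj⟩ := (pairsSubgraph_range_adj_iff hadj).mp hw'
  obtain rfl := hdisj j i v (hj ▸ Sym2.mem_mk_left _ _) hvi
  exact Sym2.congr_right.mp (hj.trans hw)

theorem edgeSet_pairsSubgraph_range (hadj : ∀ i, G.Adj (a i) (b i)) :
    (pairsSubgraph G (Set.range fun i => (a i, b i))).edgeSet =
      Set.range fun i => s(a i, b i) := by
  ext ⟨v, w⟩
  simp [pairsSubgraph_range_adj_iff hadj, eq_comm]

theorem ncard_edgeSet_pairsSubgraph_range (hadj : ∀ i, G.Adj (a i) (b i))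
    (hdisj : ∀ i j v, v ∈ s(a i, b i) → v ∈ s(a j, b j) → i = j) :
    (pairsSubgraph G (Set.range fun i => (a i, b i))).edgeSet.ncard = Nat.card ι := by
  have hinj : Function.Injective fun i => s(a i, b i) := fun i j hij =>
    hdisj i j (a i) (Sym2.mem_mk_left _ _) (congrArg (a i ∈ ·) hij ▸ Sym2.mem_mk_left _ _)
  rw [edgeSet_pairsSubgraph_range hadj, ← Nat.card_coe_set_eq, Nat.card_range_of_injective hinj]

end FamilyOfEdges

theorem le_nuAc [Finite V] {M : G.Subgraph} (hM : IsAcyclicMatching G M) :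
    M.edgeSet.ncard ≤ nuAc G :=
  le_csSup ⟨(Set.univ : Set (Sym2 V)).ncard, by
    rintro k ⟨M', -, rfl⟩
    exact Set.ncard_le_ncard (Set.subset_univ _)⟩ ⟨M, hM, rfl⟩

end SimpleGraph

section SatGraph

variable {n m : ℕ} {c : Fin m → Finset (Fin n × Bool)}

@[simp]
theorem satGraph_adj_inl_inl {i i' : Fin n} {k k' : Fin 3} :
    (satGraph c).Adj (Sum.inl (i, k)) (Sum.inl (i', k')) ↔ i = i' ∧ k ≠ k' := by
  simp only [satGraph, fromRel_adj, satRel]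
  grind

@[simp]
theorem satGraph_adj_inl_inr {i : Fin n} {k : Fin 3} {j : Fin m} {o : Option (Fin n × Bool)} :
    (satGraph c).Adj (Sum.inl (i, k)) (Sum.inr (j, o)) ↔
      (k = 1 ∧ o = some (i, true) ∧ (i, true) ∈ c j) ∨
      (k = 0 ∧ o = some (i, false) ∧ (i, false) ∈ c j) := by
  simp [satGraph, satRel]

@[simp]
theorem satGraph_adj_inr_inr {j j' : Fin m} {o o' : Option (Fin n × Bool)} :
    (satGraph c).Adj (Sum.inr (j, o)) (Sum.inr (j', o')) ↔
      j = j' ∧ o ≠ o' ∧ (∀ l, o = some l → l ∈ c j) ∧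
        (∀ l, o' = some l → l ∈ c j) := by
  simp only [satGraph, fromRel_adj, satRel]
  grind

def m3Fst (p : Fin m → Option (Fin n × Bool)) : Fin n ⊕ Fin m → SatV n m :=
  Sum.elim (fun i => Sum.inl (i, 2)) (fun j => Sum.inr (j, p j))

def m3Snd (q : Fin m → Option (Fin n × Bool)) : Fin n ⊕ Fin m → SatV n m :=
  Sum.elim (fun i => Sum.inl (i, 0)) (fun j => Sum.inr (j, q j))

theorem M3_eq_pairsSubgraph (c : Fin m → Finset (Fin n × Bool))
    (p q : Fin m → Option (Fin n × Bool)) :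
    M3 c p q = pairsSubgraph (satGraph c) (Set.range fun x => (m3Fst p x, m3Snd q x)) := by
  rw [M3]
  congr 1
  ext ⟨v, w⟩
  simp [m3Fst, m3Snd, eq_comm]

variable {p q : Fin m → Option (Fin n × Bool)}

theorem adj_m3Fst_m3Snd
    (hpq : ∀ j, (satGraph c).Adj (Sum.inr (j, p j)) (Sum.inr (j, q j))) (x : Fin n ⊕ Fin m) :
    (satGraph c).Adj (m3Fst p x) (m3Snd q x) := by
  cases x <;> simp_all [m3Fst, m3Snd]

theorem eq_of_mem_m3Fst_m3Snd (x y : Fin n ⊕ Fin m) (v : SatV n m)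
    (hx : v ∈ s(m3Fst p x, m3Snd q x)) (hy : v ∈ s(m3Fst p y, m3Snd q y)) : x = y := by
  cases x <;> cases y <;>
    simp only [m3Fst, m3Snd, Sum.elim_inl, Sum.elim_inr, Sym2.mem_iff] at hx hy <;>
    grind

theorem inl_mem_M3_verts (hpq : ∀ j, (satGraph c).Adj (Sum.inr (j, p j)) (Sum.inr (j, q j)))
    {i : Fin n} {k : Fin 3} : Sum.inl (i, k) ∈ (M3 c p q).verts ↔ k = 2 ∨ k = 0 := by
  rw [M3_eq_pairsSubgraph, mem_pairsSubgraph_range_verts (adj_m3Fst_m3Snd hpq)]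
  simp [m3Fst, m3Snd, ← and_or_left]

theorem inr_mem_M3_verts (hpq : ∀ j, (satGraph c).Adj (Sum.inr (j, p j)) (Sum.inr (j, q j)))
    {j : Fin m} {o : Option (Fin n × Bool)} :
    Sum.inr (j, o) ∈ (M3 c p q).verts ↔ o = p j ∨ o = q j := by
  rw [M3_eq_pairsSubgraph, mem_pairsSubgraph_range_verts (adj_m3Fst_m3Snd hpq)]
  simp [m3Fst, m3Snd, ← and_or_left]

def m3Rank : SatV n m → ℕ
  | Sum.inl (_, k) => if k = 0 then 1 else 0
  | Sum.inr _ => 2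

theorem m3Rank_inl_le_one (i : Fin n) (k : Fin 3) : m3Rank (Sum.inl (i, k) : SatV n m) ≤ 1 := by
  simp only [m3Rank]
  split_ifs <;> omega

theorem eq_of_adj_u (hpq : ∀ j, (satGraph c).Adj (Sum.inr (j, p j)) (Sum.inr (j, q j)))
    {i : Fin n} {w : SatV n m} (hw : w ∈ (M3 c p q).verts)
    (hadj : (satGraph c).Adj (Sum.inl (i, 2)) w) : w = Sum.inl (i, 0) := by
  rcases w with ⟨i₁, k₁⟩ | ⟨j₁, o₁⟩
  · rw [inl_mem_M3_verts hpq] at hw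
    rw [satGraph_adj_inl_inl] at hadj
    grind
  · simp at hadj

theorem exists_eq_of_adj_t {i : Fin n} {w : SatV n m} (hadj : (satGraph c).Adj (Sum.inl (i, 0)) w)
    (hr : 1 ≤ m3Rank w) : ∃ j, (i, false) ∈ c j ∧ w = Sum.inr (j, some (i, false)) := by
  rcases w with ⟨i₁, k₁⟩ | ⟨j₁, o₁⟩
  · rw [satGraph_adj_inl_inl] at hadj
    simp [m3Rank, Ne.symm hadj.2] at hr
  · simp only [satGraph_adj_inl_inr] at hadj
    grind

theorem eq_of_adj_of_m3Rank_le
    (hneg : ∀ i : Fin n, (Finset.univ.filter fun j => (i, false) ∈ c j).card ≤ 1)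
    (hpq : ∀ j, (satGraph c).Adj (Sum.inr (j, p j)) (Sum.inr (j, q j)))
    {v w w' : SatV n m} (hv : v ∈ (M3 c p q).verts) (hw : w ∈ (M3 c p q).verts)
    (hw' : w' ∈ (M3 c p q).verts) (hvw : (satGraph c).Adj v w) (hvw' : (satGraph c).Adj v w')
    (hr : m3Rank v ≤ m3Rank w) (hr' : m3Rank v ≤ m3Rank w') : w = w' := by
  rcases v with ⟨i, k⟩ | ⟨j, o⟩
  · rcases (inl_mem_M3_verts hpq).mp hv with rfl | rfl
    · rw [eq_of_adj_u hpq hw hvw, eq_of_adj_u hpq hw' hvw']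
    · obtain ⟨j, hj, rfl⟩ := exists_eq_of_adj_t hvw (by simpa [m3Rank] using hr)
      obtain ⟨j', hj', rfl⟩ := exists_eq_of_adj_t hvw' (by simpa [m3Rank] using hr')
      rw [Finset.card_le_one.mp (hneg i) j (by simpa using hj) j' (by simpa using hj')]
  · rcases w with ⟨i₁, k₁⟩ | ⟨j₁, o₁⟩
    · exact absurd (hr.trans (m3Rank_inl_le_one i₁ k₁)) (by simp [m3Rank])
    rcases w' with ⟨i₂, k₂⟩ | ⟨j₂, o₂⟩
    · exact absurd (hr'.trans (m3Rank_inl_le_one i₂ k₂)) (by simp [m3Rank])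
    rw [inr_mem_M3_verts hpq] at hv hw hw'
    rw [satGraph_adj_inr_inr] at hvw hvw'
    obtain ⟨rfl, ho₁, -⟩ := hvw
    obtain ⟨rfl, ho₂, -⟩ := hvw'
    grind

theorem isAcyclic_induce_verts_M3
    (hneg : ∀ i : Fin n, (Finset.univ.filter fun j => (i, false) ∈ c j).card ≤ 1)
    (hpq : ∀ j, (satGraph c).Adj (Sum.inr (j, p j)) (Sum.inr (j, q j))) :
    ((satGraph c).induce (M3 c p q).verts).IsAcyclic :=
  isAcyclic_of_rank (fun v : (M3 c p q).verts => m3Rank (v : SatV n m))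
    fun v w w' hvw hvw' hr hr' =>
      Subtype.ext (eq_of_adj_of_m3Rank_le hneg hpq v.2 w.2 w'.2 hvw hvw' hr hr')

theorem isMatching_M3 (hpq : ∀ j, (satGraph c).Adj (Sum.inr (j, p j)) (Sum.inr (j, q j))) :
    (M3 c p q).IsMatching :=
  M3_eq_pairsSubgraph c p q ▸
    pairsSubgraph_range_isMatching (adj_m3Fst_m3Snd hpq) eq_of_mem_m3Fst_m3Snd

theorem ncard_edgeSet_M3 (hpq : ∀ j, (satGraph c).Adj (Sum.inr (j, p j)) (Sum.inr (j, q j))) :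
    (M3 c p q).edgeSet.ncard = n + m := by
  rw [M3_eq_pairsSubgraph,
    ncard_edgeSet_pairsSubgraph_range (adj_m3Fst_m3Snd hpq) eq_of_mem_m3Fst_m3Snd]
  simp

end SatGraph

theorem m3_isAcyclicMatching {n m : ℕ} (c : Fin m → Finset (Fin n × Bool))
    (hneg : ∀ i : Fin n, (Finset.univ.filter fun j => (i, false) ∈ c j).card ≤ 1)
    (p q : Fin m → Option (Fin n × Bool))
    (hpq : ∀ j, (satGraph c).Adj (Sum.inr (j, p j)) (Sum.inr (j, q j))) :
    IsAcyclicMatching (satGraph c) (M3 c p q) ∧ (M3 c p q).edgeSet.ncard = n + m ∧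
      n + m ≤ nuAc (satGraph c) := by
  have hacyc : IsAcyclicMatching (satGraph c) (M3 c p q) :=
    ⟨isMatching_M3 hpq, isAcyclic_induce_verts_M3 hneg hpq⟩
  exact ⟨hacyc, ncard_edgeSet_M3 hpq, ncard_edgeSet_M3 hpq ▸ le_nuAc hacyc⟩
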